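/- Let x : [0,∞) → ℝ be a piecewise monotone càdlàg function, t > 0, and g : ℝ → ℝ locally bounded Borel measurable. Then ∫_ℝ g(z)·u^z(x,[0,t]) dz = ∫_{(0,t]} g(x_{s−}) dUTV(x, ·)(s) + Σ_{0<s≤t, Δx_s>0} ∫_{x_{s−}}^{x_s} (g(z) − g(x_{s−})) dz, where u^z(x,[0,t]) is the number of upcrossings of the level z by x on [0,t], UTV(x,·) is the Lebesgue–Stieltjes measure of the upward total variation t ↦ UTV(x,[0,t]), and Δx_s = x_s − x_{s−}. -/

import Mathlib

open scoped ENNReal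
open Filter MeasureTheory

/-- Number of downcrossings of `[y - c/2, y + c/2]` by `x` on `[s,t]`. -/
noncomputable def downcross (x : ℝ → ℝ) (y c s t : ℝ) : ℝ≥0∞ :=
  ⨆ (n : ℕ) (_ : ∃ ρ σ : Fin n → ℝ,
      (∀ i, s ≤ ρ i ∧ ρ i ≤ σ i ∧ σ i ≤ t) ∧
      (∀ i j : Fin n, i < j → σ i ≤ ρ j) ∧
      (∀ i, y + c / 2 ≤ x (ρ i)) ∧
      (∀ i, x (σ i) < y - c / 2)), (n : ℝ≥0∞)

/-- Number of upcrossings of `[y - c/2, y + c/2]` by `x` on `[s,t]`. -/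
noncomputable def upcross (x : ℝ → ℝ) (y c s t : ℝ) : ℝ≥0∞ :=
  downcross (fun u => -x u) (-y) c s t

/-- Number of upcrossings of the level `z` by `x` on `[s,t]`, i.e. the limit as
`c → 0+` of the numbers of upcrossings of `[z - c/2, z + c/2]` (the supremum, by
monotonicity in `c`). -/
noncomputable def levelUpcross (x : ℝ → ℝ) (z s t : ℝ) : ℝ≥0∞ :=
  ⨆ (c : ℝ) (_ : 0 < c), upcross x z c s t

/-- The upward (total) variation of `x` on `[s,t]`:
`UTV(x,[s,t]) = sup_π Σ_{[u,v]∈π} max(x_v − x_u, 0)`. -/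
noncomputable def upVar (x : ℝ → ℝ) (s t : ℝ) : ℝ≥0∞ :=
  ⨆ (n : ℕ) (u : Fin (n + 1) → ℝ) (_ : Monotone u) (_ : u 0 = s)
    (_ : u (Fin.last n) = t),
    ∑ i : Fin n, ENNReal.ofReal (x (u i.succ) - x (u i.castSucc))

/-- `x` is càdlàg: right-continuous with left limits. -/
def Cadlag (x : ℝ → ℝ) : Prop :=
  (∀ a : ℝ, ContinuousWithinAt x (Set.Ici a) a) ∧
  (∀ a : ℝ, ∃ l : ℝ, Tendsto x (nhdsWithin a (Set.Iio a)) (nhds l))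

/-- `x` is piecewise monotone: every compact interval `[0,T]` splits into finitely
many intervals on which `x` is monotone. -/
def PiecewiseMonotone (x : ℝ → ℝ) : Prop :=
  ∀ T : ℝ, 0 < T → ∃ (N : ℕ) (τ : Fin (N + 1) → ℝ), Monotone τ ∧ τ 0 = 0 ∧
    τ (Fin.last N) = T ∧ ∀ i : Fin N,
      MonotoneOn x (Set.Icc (τ i.castSucc) (τ i.succ)) ∨
        AntitoneOn x (Set.Icc (τ i.castSucc) (τ i.succ))

/-! Split `[0, t]` into intervals `[τ i, τ (i + 1)]` on which `x` is monotone or antitone.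
For a level `z` different from all `x (τ i)`, small bands around `z` are crossed upwards exactly
along the steps with `x (τ i) < z < x (τ (i + 1))`, so the left-hand side is
`∑ i, ∫ z in (x (τ i), x (τ (i + 1))], g z`. On an increasing piece `UTV(x, ·)` differs from `x`
by a constant, and the change of variables `z = x s` through the generalized inverse of `x`
turns `∫ z in (x a, x b], g z` into `∫ s in (a, b], g (x (s-)) dUTV(x, s)`, up to the gaps
`(x (s-), x s]` left by upward jumps, on which the generalized inverse is constant; these gaps
produce the jump corrections. A decreasing piece contributes nothing to either side. -/

open Set Function Topology

section

variable {x : ℝ → ℝ} {τ : ℕ → ℝ} {N : ℕ} {z c : ℝ}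

section Upcrossings

variable {s t : ℝ}

def HasUpcrossings (x : ℝ → ℝ) (z c s : ℝ) : ℕ → ℝ → Prop
  | 0, _ => True
  | n + 1, t => ∃ ρ σ, s ≤ ρ ∧ ρ ≤ σ ∧ σ ≤ t ∧ x ρ ≤ z - c / 2 ∧ z + c / 2 < x σ ∧
      HasUpcrossings x z c s n ρ

theorem exists_fin_iff_hasUpcrossings {n : ℕ} :
    (∃ ρ σ : Fin n → ℝ, (∀ i, s ≤ ρ i ∧ ρ i ≤ σ i ∧ σ i ≤ t) ∧
      (∀ i j : Fin n, i < j → σ i ≤ ρ j) ∧ (∀ i, x (ρ i) ≤ z - c / 2) ∧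
      (∀ i, z + c / 2 < x (σ i))) ↔ HasUpcrossings x z c s n t := by
  induction n generalizing t with
  | zero => exact ⟨fun _ => trivial, fun _ => ⟨finZeroElim, finZeroElim, finZeroElim,
      finZeroElim, finZeroElim, finZeroElim⟩⟩
  | succ n ih =>
    constructor
    · rintro ⟨ρ, σ, hbd, hord, hρ, hσ⟩
      refine ⟨ρ (Fin.last n), σ (Fin.last n), (hbd _).1, (hbd _).2.1, (hbd _).2.2, hρ _, hσ _,
        ih.1 ⟨fun i => ρ i.castSucc, fun i => σ i.castSucc, fun i => ?_, fun i j hij => ?_,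
          fun i => hρ _, fun i => hσ _⟩⟩
      · exact ⟨(hbd _).1, (hbd _).2.1, hord _ _ (Fin.castSucc_lt_last i)⟩
      · exact hord _ _ (Fin.castSucc_lt_castSucc_iff.2 hij)
    · rintro ⟨ρ', σ', hsρ, hρσ, hσt, hρ', hσ', h⟩
      obtain ⟨ρ, σ, hbd, hord, hρ, hσ⟩ := ih.2 h
      refine ⟨Fin.snoc ρ ρ', Fin.snoc σ σ', ?_⟩
      simp only [Fin.forall_fin_succ', Fin.snoc_castSucc, Fin.snoc_last,
        Fin.castSucc_lt_castSucc_iff, Fin.castSucc_lt_last, lt_irrefl, false_imp_iff,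
        forall_const, and_true]
      exact ⟨⟨fun i => ⟨(hbd i).1, (hbd i).2.1, (hbd i).2.2.trans (hρσ.trans hσt)⟩, hsρ, hρσ, hσt⟩,
        ⟨fun i => ⟨hord i, (hbd i).2.2⟩, fun i hi => absurd hi (Fin.le_last _).not_gt⟩,
        ⟨hρ, hρ'⟩, hσ, hσ'⟩

theorem upcross_eq_iSup_hasUpcrossings :
    upcross x z c s t = ⨆ (n : ℕ) (_ : HasUpcrossings x z c s n t), (n : ℝ≥0∞) := by
  refine iSup_congr fun n => iSup_congr_Prop ?_ fun _ => rfl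
  have hlow : ∀ y, -z + c / 2 ≤ -y ↔ y ≤ z - c / 2 := fun y => by constructor <;> intro <;> linarith
  have hhigh : ∀ y, -y < -z - c / 2 ↔ z + c / 2 < y := fun y => by
    constructor <;> intro <;> linarith
  simp only [← exists_fin_iff_hasUpcrossings, hlow, hhigh]

theorem HasUpcrossings.mono_right {n : ℕ} {t' : ℝ} (htt' : t ≤ t')
    (h : HasUpcrossings x z c s n t) : HasUpcrossings x z c s n t' := by
  cases n with
  | zero => trivial
  | succ n =>
    obtain ⟨ρ, σ, hsρ, hρσ, hσt, hρ, hσ, h⟩ := h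
    exact ⟨ρ, σ, hsρ, hρσ, hσt.trans htt', hρ, hσ, h⟩

theorem HasUpcrossings.of_width_le {n : ℕ} {c' : ℝ} (hc : c' ≤ c) :
    HasUpcrossings x z c s n t → HasUpcrossings x z c' s n t := by
  induction n generalizing t with
  | zero => exact fun _ => trivial
  | succ n ih =>
    rintro ⟨ρ, σ, hsρ, hρσ, hσt, hρ, hσ, h⟩
    exact ⟨ρ, σ, hsρ, hρσ, hσt, by linarith, by linarith, ih h⟩

theorem antitone_upcross : Antitone fun c => upcross x z c s t := fun _ _ hc => by
  simp only [upcross_eq_iSup_hasUpcrossings]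
  exact iSup₂_le fun n hn => le_iSup₂_of_le n (hn.of_width_le hc) le_rfl

theorem hasUpcrossings_self_iff {n : ℕ} (hc : 0 ≤ c) : HasUpcrossings x z c s n s ↔ n = 0 := by
  refine ⟨fun h => ?_, fun h => h ▸ trivial⟩
  cases n with
  | zero => rfl
  | succ n =>
    obtain ⟨ρ, σ, hsρ, hρσ, hσs, hρ, hσ, -⟩ := h
    obtain rfl : ρ = σ := le_antisymm hρσ (hσs.trans hsρ)
    linarith

theorem HasUpcrossings.of_succ_piece {n : ℕ} {m b : ℝ} (hc : 0 ≤ c)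
    (hx : MonotoneOn x (Icc m b) ∨ AntitoneOn x (Icc m b))
    (hxm : x m ∉ Ioc (z - c / 2) (z + c / 2)) (h : HasUpcrossings x z c s (n + 1) b) :
    HasUpcrossings x z c s (n + 1) m ∨
      (x m ≤ z - c / 2 ∧ z + c / 2 < x b ∧ HasUpcrossings x z c s n m) := by
  obtain ⟨ρ, σ, hsρ, hρσ, hσb, hρ, hσ, h⟩ := h
  -- The last upcrossing `[ρ, σ]` either ends by `m`, can be cut at `m` (if `x m` is above the
  -- band), or forces `x` to increase on `[m, b]`.
  rcases le_or_gt σ m with hσm | hmσ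
  · exact Or.inl ⟨ρ, σ, hsρ, hρσ, hσm, hρ, hσ, h⟩
  have hσI : σ ∈ Icc m b := ⟨hmσ.le, hσb⟩
  have hmI : m ∈ Icc m b := ⟨le_rfl, hmσ.le.trans hσb⟩
  have hbI : b ∈ Icc m b := ⟨hmσ.le.trans hσb, le_rfl⟩
  have mono_of_low : ∀ p ∈ Icc m b, p ≤ σ → x p ≤ z - c / 2 → MonotoneOn x (Icc m b) :=
    fun p hp hpσ hp_low => hx.resolve_right fun hanti => by linarith [hanti hp hσI hpσ]
  rcases le_or_gt ρ m with hρm | hmρ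
  · by_cases hm_high : z + c / 2 < x m
    · exact Or.inl ⟨ρ, m, hsρ, hρm, le_rfl, hρ, hm_high, h⟩
    have hm_low : x m ≤ z - c / 2 := by
      by_contra hm_low
      exact hxm ⟨not_le.1 hm_low, not_lt.1 hm_high⟩
    have hmono := mono_of_low m hmI hmσ.le hm_low
    exact Or.inr ⟨hm_low, by linarith [hmono hσI hbI hσb], h.mono_right hρm⟩
  · have hρI : ρ ∈ Icc m b := ⟨hmρ.le, hρσ.trans hσb⟩
    have hmono := mono_of_low ρ hρI hρσ hρ
    refine Or.inr ⟨by linarith [hmono hmI hρI hmρ.le], by linarith [hmono hσI hbI hσb], ?_⟩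
    cases n with
    | zero => trivial
    | succ n =>
      obtain ⟨ρ', σ', hsρ', hρσ', hσρ, hρ', hσ', h'⟩ := h
      refine ⟨ρ', σ', hsρ', hρσ', not_lt.1 fun hmσ' => ?_, hρ', hσ', h'⟩
      linarith [hmono ⟨hmσ'.le, hσρ.trans hρI.2⟩ hρI hσρ]

end Upcrossings

theorem Antitone.iSup_pos_eq_of_eventually_eq {f : ℝ → ℝ≥0∞} {K : ℝ≥0∞} (hf : Antitone f)
    (hK : ∀ᶠ c in 𝓝[>] 0, f c = K) : ⨆ c > 0, f c = K := by
  obtain ⟨ε, hε, hεK⟩ := mem_nhdsGT_iff_exists_Ioo_subset.1 hK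
  refine le_antisymm (iSup₂_le fun c hc => ?_) ?_
  · exact (hf (min_le_left c (ε / 2))).trans_eq
      (hεK ⟨lt_min hc (half_pos hε), (min_le_right _ _).trans_lt (half_lt_self hε)⟩)
  · exact le_iSup₂_of_le (ε / 2) (half_pos hε) (hεK ⟨half_pos hε, half_lt_self hε⟩).ge

theorem integrableOn_Ioc_of_abs_le {g : ℝ → ℝ} {p q M : ℝ} (hgm : Measurable g)
    (hgb : ∀ z ∈ Ioc p q, |g z| ≤ M) : IntegrableOn g (Ioc p q) :=
  Measure.integrableOn_of_bounded measure_Ioc_lt_top.ne hgm.aestronglyMeasurable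
    ((ae_restrict_iff' measurableSet_Ioc).2 (Eventually.of_forall hgb))

structure IsMonotonicityPartition (x : ℝ → ℝ) (τ : ℕ → ℝ) (N : ℕ) : Prop where
  monotone : Monotone τ
  piece : ∀ i < N, MonotoneOn x (Icc (τ i) (τ (i + 1))) ∨ AntitoneOn x (Icc (τ i) (τ (i + 1)))

theorem IsMonotonicityPartition.hasUpcrossings_iff (hP : IsMonotonicityPartition x τ N)
    (hc : 0 ≤ c) (hsep : ∀ i < N, x (τ i) ∉ Ioc (z - c / 2) (z + c / 2)) {j n : ℕ} (hj : j ≤ N) :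
    HasUpcrossings x z c (τ 0) n (τ j) ↔
      n ≤ ((Finset.range j).filter
        fun i => x (τ i) ≤ z - c / 2 ∧ z + c / 2 < x (τ (i + 1))).card := by
  induction j generalizing n with
  | zero => simp [hasUpcrossings_self_iff hc]
  | succ j ih =>
    have hjN : j < N := hj
    set K := ((Finset.range j).filter
      fun i => x (τ i) ≤ z - c / 2 ∧ z + c / 2 < x (τ (i + 1))).card with hK
    rw [Finset.card_filter, Finset.sum_range_succ, ← Finset.card_filter, ← hK]
    constructor
    · intro h
      cases n with
      | zero => exact Nat.zero_le _
      | succ n =>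
        rcases h.of_succ_piece hc (hP.piece j hjN) (hsep j hjN) with h | ⟨hlow, hhigh, h⟩
        · have := (ih hjN.le).1 h
          omega
        · rw [if_pos ⟨hlow, hhigh⟩]
          have := (ih hjN.le).1 h
          omega
    · intro hn
      by_cases hnK : n ≤ K
      · exact ((ih hjN.le).2 hnK).mono_right (hP.monotone j.le_succ)
      split_ifs at hn with hcross
      · obtain rfl : n = K + 1 := by omega
        exact ⟨τ j, τ (j + 1), hP.monotone (Nat.zero_le _), hP.monotone j.le_succ, le_rfl,
          hcross.1, hcross.2, (ih hjN.le).2 le_rfl⟩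
      · omega

theorem IsMonotonicityPartition.upcross_eq (hP : IsMonotonicityPartition x τ N)
    (hc : 0 ≤ c) (hsep : ∀ i < N, x (τ i) ∉ Ioc (z - c / 2) (z + c / 2)) :
    upcross x z c (τ 0) (τ N) = ((Finset.range N).filter
        fun i => x (τ i) ≤ z - c / 2 ∧ z + c / 2 < x (τ (i + 1))).card := by
  simp only [upcross_eq_iSup_hasUpcrossings, hP.hasUpcrossings_iff hc hsep le_rfl]
  exact le_antisymm (iSup₂_le fun n hn => Nat.cast_le.2 hn) (le_iSup₂_of_le _ le_rfl le_rfl)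

theorem IsMonotonicityPartition.levelUpcross_eq (hP : IsMonotonicityPartition x τ N)
    (hz : ∀ i ≤ N, x (τ i) ≠ z) :
    levelUpcross x z (τ 0) (τ N) =
      ((Finset.range N).filter fun i => x (τ i) < z ∧ z < x (τ (i + 1))).card := by
  have hfar : ∀ᶠ c in 𝓝[>] 0, 0 < c ∧ ∀ i ∈ Finset.range (N + 1), c / 2 < |x (τ i) - z| := by
    refine (eventually_mem_nhdsWithin).and ((Filter.eventually_all_finset _).2 fun i hi => ?_)
    have hpos : 0 < |x (τ i) - z| :=
      abs_pos.2 (sub_ne_zero.2 (hz i (Nat.lt_succ_iff.1 (Finset.mem_range.1 hi))))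
    filter_upwards [Ioo_mem_nhdsGT (by positivity : (0 : ℝ) < 2 * |x (τ i) - z|)] with c hc
    linarith [hc.2]
  refine antitone_upcross.iSup_pos_eq_of_eventually_eq (hfar.mono fun c ⟨hc, hfar⟩ => ?_)
  have hside : ∀ i ≤ N, (x (τ i) ≤ z - c / 2 ↔ x (τ i) < z) ∧ (z + c / 2 < x (τ i) ↔ z < x (τ i)) :=
    fun i hi => by
      rcases lt_abs.1 (hfar i (Finset.mem_range.2 (Nat.lt_succ_of_le hi))) with h | h <;>
        constructor <;> constructor <;> intro <;> linarith
  rw [hP.upcross_eq hc.le fun i hi hmem => ?_]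
  · congr 2
    refine Finset.filter_congr fun i hi => ?_
    have hi := Finset.mem_range.1 hi
    rw [(hside i hi.le).1, (hside (i + 1) hi).2]
  · rcases lt_abs.1 (hfar i (Finset.mem_range.2 (Nat.lt_succ_of_lt hi))) with h | h <;>
      linarith [hmem.1, hmem.2]

theorem IsMonotonicityPartition.integral_mul_levelUpcross_eq_sum
    (hP : IsMonotonicityPartition x τ N)
    {g : ℝ → ℝ} (hg : ∀ i < N, IntegrableOn g (Ioc (x (τ i)) (x (τ (i + 1))))) :
    ∫ z, g z * (levelUpcross x z (τ 0) (τ N)).toReal =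
      ∑ i ∈ Finset.range N, ∫ z in Ioc (x (τ i)) (x (τ (i + 1))), g z := by
  have hgrid : ∀ᵐ z, z ∉ (fun i => x (τ i)) '' Iic N :=
    measure_eq_zero_iff_ae_notMem.1 (((finite_Iic N).image _).measure_zero volume)
  calc ∫ z, g z * (levelUpcross x z (τ 0) (τ N)).toReal
      = ∫ z, ∑ i ∈ Finset.range N, (Ioc (x (τ i)) (x (τ (i + 1)))).indicator g z := by
        refine integral_congr_ae (hgrid.mono fun z hz => ?_)
        replace hz : ∀ i ≤ N, x (τ i) ≠ z := fun i hi h => hz ⟨i, hi, h⟩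
        beta_reduce
        rw [hP.levelUpcross_eq hz, ENNReal.toReal_natCast, Finset.card_filter, Nat.cast_sum,
          Finset.mul_sum]
        refine Finset.sum_congr rfl fun i hi => ?_
        have hne := hz (i + 1) (Finset.mem_range.1 hi)
        by_cases hzi : x (τ i) < z ∧ z < x (τ (i + 1))
        · rw [indicator_of_mem (show z ∈ Ioc _ _ from ⟨hzi.1, hzi.2.le⟩), if_pos hzi,
            Nat.cast_one, mul_one]
        · rw [indicator_of_notMem fun h : z ∈ Ioc _ _ => hzi ⟨h.1, h.2.lt_of_ne' hne⟩, if_neg hzi,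
            Nat.cast_zero, mul_zero]
    _ = ∑ i ∈ Finset.range N, ∫ z in Ioc (x (τ i)) (x (τ (i + 1))), g z := by
        rw [integral_finsetSum _ fun i hi =>
          (hg i (Finset.mem_range.1 hi)).integrable_indicator measurableSet_Ioc]
        simp only [integral_indicator measurableSet_Ioc]

theorem Fin.sum_succ_sub_castSucc {n : ℕ} (f : Fin (n + 1) → ℝ) :
    ∑ i : Fin n, (f i.succ - f i.castSucc) = f (Fin.last n) - f 0 := by
  induction n with
  | zero => simp
  | succ n ih =>
    rw [Fin.sum_univ_castSucc]
    simp only [Fin.succ_castSucc]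
    rw [ih fun i => f i.castSucc, Fin.castSucc_zero, Fin.succ_last]
    ring

section UpwardVariation

variable {a b s m t : ℝ}

theorem sum_le_upVar {n : ℕ} {u : Fin (n + 1) → ℝ} (hu : Monotone u) :
    ∑ i : Fin n, ENNReal.ofReal (x (u i.succ) - x (u i.castSucc)) ≤
      upVar x (u 0) (u (Fin.last n)) :=
  le_iSup_of_le n <| le_iSup_of_le u <| le_iSup_of_le hu <| le_iSup_of_le rfl <|
    le_iSup_of_le rfl le_rfl

theorem ofReal_sub_le_upVar (hab : a ≤ b) : ENNReal.ofReal (x b - x a) ≤ upVar x a b := by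
  simpa using sum_le_upVar (x := x) (u := ![a, b])
    (Fin.monotone_iff_le_succ.2 fun i => by fin_cases i; simpa using hab)

theorem upVar_eq_ofReal (hab : a ≤ b) (hx : MonotoneOn x (Icc a b) ∨ AntitoneOn x (Icc a b)) :
    upVar x a b = ENNReal.ofReal (x b - x a) := by
  refine le_antisymm (iSup_le fun n => iSup_le fun u => iSup_le fun hu => iSup_le fun h0 =>
    iSup_le fun hl => ?_) (ofReal_sub_le_upVar hab)
  have hmem : ∀ i, u i ∈ Icc a b := fun i => ⟨h0 ▸ hu (Fin.zero_le i), hl ▸ hu (Fin.le_last i)⟩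
  have hstep : ∀ i : Fin n, u i.castSucc ≤ u i.succ := fun i => hu (Fin.castSucc_le_succ i)
  rcases hx with hmono | hanti
  · rw [← ENNReal.ofReal_sum_of_nonneg fun i _ => sub_nonneg.2 (hmono (hmem _) (hmem _) (hstep i)),
      Fin.sum_succ_sub_castSucc (fun i => x (u i)), h0, hl]
  · simp only [ENNReal.ofReal_eq_zero.2 (sub_nonpos.2 (hanti (hmem _) (hmem _) (hstep _))),
      Finset.sum_const_zero, zero_le]

theorem upVar_le_add (hsm : s ≤ m) (hmt : m ≤ t) : upVar x s t ≤ upVar x s m + upVar x m t := by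
  refine iSup_le fun n => iSup_le fun u => iSup_le fun hu => iSup_le fun h0 => iSup_le fun hl => ?_
  have hsplit : ∀ i : Fin n, ENNReal.ofReal (x (u i.succ) - x (u i.castSucc)) ≤
      ENNReal.ofReal (x (min (u i.succ) m) - x (min (u i.castSucc) m)) +
        ENNReal.ofReal (x (max (u i.succ) m) - x (max (u i.castSucc) m)) := fun i => by
    have hstep : u i.castSucc ≤ u i.succ := hu (Fin.castSucc_le_succ i)
    rcases le_total (u i.succ) m with h1 | h1
    · simp [min_eq_left h1, min_eq_left (hstep.trans h1), max_eq_right h1,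
        max_eq_right (hstep.trans h1)]
    rcases le_total m (u i.castSucc) with h2 | h2
    · simp [min_eq_right h2, min_eq_right (h2.trans hstep), max_eq_left h2,
        max_eq_left (h2.trans hstep)]
    rw [min_eq_right h1, min_eq_left h2, max_eq_left h1, max_eq_right h2,
      ← sub_add_sub_cancel (x (u i.succ)) (x m)]
    exact (ENNReal.ofReal_add_le).trans_eq (add_comm _ _)
  calc ∑ i : Fin n, ENNReal.ofReal (x (u i.succ) - x (u i.castSucc))
      ≤ ∑ i : Fin n, ENNReal.ofReal (x (min (u i.succ) m) - x (min (u i.castSucc) m)) +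
        ∑ i : Fin n, ENNReal.ofReal (x (max (u i.succ) m) - x (max (u i.castSucc) m)) :=
        (Finset.sum_le_sum fun i _ => hsplit i).trans_eq Finset.sum_add_distrib
    _ ≤ upVar x s m + upVar x m t := by
      gcongr
      · simpa [h0, hl, hsm, hmt] using sum_le_upVar (x := x) (u := fun i => min (u i) m)
          fun _ _ hij => min_le_min_right m (hu hij)
      · simpa [h0, hl, hsm, hmt] using sum_le_upVar (x := x) (u := fun i => max (u i) m)
          fun _ _ hij => max_le_max_right m (hu hij)

theorem upVar_add_ofReal_le (hsm : s ≤ m) (hmt : m ≤ t) :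
    upVar x s m + ENNReal.ofReal (x t - x m) ≤ upVar x s t := by
  have hsnoc : ∀ (n : ℕ) (u : Fin (n + 1) → ℝ), Monotone u → u 0 = s → u (Fin.last n) = m →
      ∑ i : Fin n, ENNReal.ofReal (x (u i.succ) - x (u i.castSucc)) +
        ENNReal.ofReal (x t - x m) ≤ upVar x s t := by
    intro n u hu h0 hl
    have hmono : Monotone (Fin.snoc u t : Fin (n + 2) → ℝ) := by
      refine Fin.monotone_iff_le_succ.2 (Fin.lastCases ?_ fun i => ?_)
      · simpa [hl] using hmt
      · rw [Fin.succ_castSucc, Fin.snoc_castSucc, Fin.snoc_castSucc]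
        exact hu (Fin.castSucc_le_succ i)
    have h := sum_le_upVar (x := x) hmono
    rw [Fin.sum_univ_castSucc, ← Fin.castSucc_zero] at h
    simp only [Fin.succ_castSucc, Fin.snoc_castSucc, Fin.succ_last, Fin.snoc_last, h0, hl] at h
    exact h
  have hjump : ENNReal.ofReal (x t - x m) ≤ upVar x s t :=
    le_add_self.trans (hsnoc 1 ![s, m]
      (Fin.monotone_iff_le_succ.2 fun i => by fin_cases i; simpa using hsm) rfl rfl)
  calc upVar x s m + ENNReal.ofReal (x t - x m)
      ≤ (upVar x s t - ENNReal.ofReal (x t - x m)) + ENNReal.ofReal (x t - x m) := by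
        gcongr
        exact iSup_le fun n => iSup_le fun u => iSup_le fun hu => iSup_le fun h0 =>
          iSup_le fun hl => (ENNReal.cancel_of_ne ENNReal.ofReal_ne_top).le_tsub_of_add_le_right
            (hsnoc n u hu h0 hl)
    _ = upVar x s t := tsub_add_cancel_of_le hjump

theorem upVar_eq_add_ofReal (hsm : s ≤ m) (hmt : m ≤ t)
    (hx : MonotoneOn x (Icc m t) ∨ AntitoneOn x (Icc m t)) :
    upVar x s t = upVar x s m + ENNReal.ofReal (x t - x m) :=
  le_antisymm ((upVar_le_add hsm hmt).trans_eq (by rw [upVar_eq_ofReal hmt hx]))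
    (upVar_add_ofReal_le hsm hmt)

theorem IsMonotonicityPartition.eq_add_max_of_upVar (hP : IsMonotonicityPartition x τ N)
    {F : ℝ → ℝ} (hF : ∀ u, τ 0 ≤ u → F u = (upVar x (τ 0) u).toReal) {j : ℕ} (hj : j < N)
    {u : ℝ} (hu : u ∈ Icc (τ j) (τ (j + 1))) : F u = F (τ j) + max (x u - x (τ j)) 0 := by
  have hτ0 : ∀ j, τ 0 ≤ τ j := fun j => hP.monotone (Nat.zero_le j)
  have hsplit : ∀ j < N, ∀ u ∈ Icc (τ j) (τ (j + 1)),
      upVar x (τ 0) u = upVar x (τ 0) (τ j) + ENNReal.ofReal (x u - x (τ j)) :=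
    fun j hj u hu => upVar_eq_add_ofReal (hτ0 j) hu.1 <| (hP.piece j hj).imp
      (fun h => h.mono (Icc_subset_Icc_right hu.2)) (fun h => h.mono (Icc_subset_Icc_right hu.2))
  have hfin : ∀ j ≤ N, upVar x (τ 0) (τ j) ≠ ⊤ := by
    intro j hj
    induction j with
    | zero => simp [upVar_eq_ofReal le_rfl (Or.inl ((subsingleton_Icc_of_ge le_rfl).monotoneOn x))]
    | succ j ih =>
      rw [hsplit j hj (τ (j + 1)) ⟨hP.monotone j.le_succ, le_rfl⟩]
      exact ENNReal.add_ne_top.2 ⟨ih (Nat.le_of_succ_le hj), ENNReal.ofReal_ne_top⟩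
  rw [hF u ((hτ0 j).trans hu.1), hF (τ j) (hτ0 j), hsplit j hj u hu,
    ENNReal.toReal_add (hfin j hj.le) ENNReal.ofReal_ne_top, ENNReal.toReal_ofReal']

end UpwardVariation

def upJumps (x : ℝ → ℝ) (a b : ℝ) : Set ℝ := {s | s ∈ Ioc a b ∧ leftLim x s < x s}

theorem mem_upJumps {a b s : ℝ} : s ∈ upJumps x a b ↔ s ∈ Ioc a b ∧ leftLim x s < x s := Iff.rfl

noncomputable def jumpCorrection (x g : ℝ → ℝ) (s : ℝ) : ℝ :=
  ∫ z in leftLim x s..x s, (g z - g (leftLim x s))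

namespace StieltjesFunction

variable (f : StieltjesFunction ℝ) {a b z : ℝ} {g : ℝ → ℝ} {M : ℝ}

/-- The generalized inverse of `f` on `[a, b]`; adding `b` to the set makes it monotone on all
of `ℝ`. -/
noncomputable def genInv (a b z : ℝ) : ℝ := sInf (insert b {u ∈ Icc a b | z ≤ f u})

theorem bddBelow_genInv_set (hab : a ≤ b) : BddBelow (insert b {u ∈ Icc a b | z ≤ f u}) :=
  ⟨a, forall_mem_insert.2 ⟨hab, fun _ hu => hu.1.1⟩⟩

theorem genInv_le_right (hab : a ≤ b) : f.genInv a b z ≤ b :=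
  csInf_le (f.bddBelow_genInv_set hab) (mem_insert _ _)

theorem monotone_genInv (hab : a ≤ b) : Monotone (f.genInv a b) := fun _ _ hzz' =>
  csInf_le_csInf (f.bddBelow_genInv_set hab) (insert_nonempty _ _)
    (insert_subset_insert fun _ hu => ⟨hu.1, hzz'.trans hu.2⟩)

theorem le_apply_genInv (hab : a ≤ b) (hz : z ≤ f b) : z ≤ f (f.genInv a b z) := by
  by_contra! hlt
  obtain ⟨v, hv, hsub⟩ := mem_nhdsGE_iff_exists_Ico_subset.1
    ((f.right_continuous _).eventually (gt_mem_nhds hlt))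
  obtain ⟨w, hw, hwv⟩ := exists_lt_of_csInf_lt (insert_nonempty b {u ∈ Icc a b | z ≤ f u}) hv
  have hfw : f w < z := hsub ⟨csInf_le (f.bddBelow_genInv_set hab) hw, hwv⟩
  rcases hw with rfl | hw
  · exact hfw.not_ge hz
  · exact hfw.not_ge hw.2

theorem genInv_le_iff (hab : a ≤ b) (hz : z ∈ Ioc (f a) (f b)) {c : ℝ} :
    f.genInv a b z ≤ c ↔ z ≤ f (min b c) := by
  refine ⟨fun h => (f.le_apply_genInv hab hz.2).trans (f.mono (le_min (f.genInv_le_right hab) h)),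
    fun h => ?_⟩
  rcases lt_or_ge c a with hca | hac
  · exact absurd (h.trans (f.mono ((min_le_right _ _).trans hca.le))) hz.1.not_ge
  · exact (csInf_le (f.bddBelow_genInv_set hab) (mem_insert_of_mem _
      ⟨⟨le_min hab hac, min_le_left _ _⟩, h⟩)).trans (min_le_right _ _)

theorem left_lt_genInv (hab : a ≤ b) (hz : z ∈ Ioc (f a) (f b)) : a < f.genInv a b z :=
  not_le.1 fun h => hz.1.not_ge (by simpa [min_eq_right hab] using (f.genInv_le_iff hab hz).1 h)

theorem leftLim_genInv_le (hab : a ≤ b) (hz : z ∈ Ioc (f a) (f b)) :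
    leftLim f (f.genInv a b z) ≤ z := by
  refine le_of_tendsto (f.mono.tendsto_leftLim _) ?_
  filter_upwards [self_mem_nhdsWithin] with u (hu : u < f.genInv a b z)
  have h := mt (f.genInv_le_iff hab hz).2 hu.not_ge
  rw [min_eq_right (hu.le.trans (f.genInv_le_right hab))] at h
  exact (not_le.1 h).le

theorem genInv_eq_of_mem_gap (hab : a ≤ b) {s : ℝ} (hs : s ∈ Ioc a b)
    (hz : z ∈ Ioc (leftLim f s) (f s)) : f.genInv a b z = s := by
  have hz' : z ∈ Ioc (f a) (f b) :=
    ⟨(f.mono.le_leftLim hs.1).trans_lt hz.1, hz.2.trans (f.mono hs.2)⟩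
  refine le_antisymm ((f.genInv_le_iff hab hz').2 (by rw [min_eq_right hs.2]; exact hz.2))
    (not_lt.1 fun h => ?_)
  exact ((f.le_apply_genInv hab hz'.2).trans (f.mono.le_leftLim h)).not_gt hz.1

theorem map_genInv (hab : a ≤ b) :
    (volume.restrict (Ioc (f a) (f b))).map (f.genInv a b) = f.measure.restrict (Ioc a b) := by
  have hm := (f.monotone_genInv hab).measurable
  refine Measure.ext_of_Iic _ _ fun c => ?_
  have hpre : f.genInv a b ⁻¹' Iic c ∩ Ioc (f a) (f b) = Ioc (f a) (f (min b c)) := by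
    ext z
    refine ⟨fun ⟨h, hz⟩ => ⟨hz.1, (f.genInv_le_iff hab hz).1 h⟩, fun ⟨h1, h2⟩ => ?_⟩
    have hz : z ∈ Ioc (f a) (f b) := ⟨h1, h2.trans (f.mono (min_le_left _ _))⟩
    exact ⟨(f.genInv_le_iff hab hz).2 h2, hz⟩
  rw [Measure.map_apply hm measurableSet_Iic, Measure.restrict_apply (hm measurableSet_Iic), hpre,
    Measure.restrict_apply measurableSet_Iic, inter_comm, Ioc_inter_Iic, Real.volume_Ioc,
    measure_Ioc]

theorem setIntegral_comp_leftLim_eq (hab : a ≤ b) (hgm : Measurable g) :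
    ∫ s in Ioc a b, g (leftLim f s) ∂f.measure =
      ∫ z in Ioc (f a) (f b), g (leftLim f (f.genInv a b z)) := by
  have hmeas : Measurable fun s => g (leftLim f s) := hgm.comp f.mono.leftLim.measurable
  rw [← f.map_genInv hab,
    integral_map (f.monotone_genInv hab).measurable.aemeasurable hmeas.aestronglyMeasurable]

theorem integrableOn_comp_leftLim_genInv (hab : a ≤ b) (hgm : Measurable g)
    (hgb : ∀ z ∈ Icc (f a) (f b), |g z| ≤ M) :
    IntegrableOn (fun z => g (leftLim f (f.genInv a b z))) (Ioc (f a) (f b)) :=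
  integrableOn_Ioc_of_abs_le
    (hgm.comp (f.mono.leftLim.measurable.comp (f.monotone_genInv hab).measurable)) fun _ hz =>
      hgb _ ⟨f.mono.le_leftLim (f.left_lt_genInv hab hz), (f.leftLim_genInv_le hab hz).trans hz.2⟩

theorem integrableOn_comp_leftLim (hab : a ≤ b) (hgm : Measurable g)
    (hgb : ∀ z ∈ Icc (f a) (f b), |g z| ≤ M) :
    IntegrableOn (fun s => g (leftLim f s)) (Ioc a b) f.measure := by
  have hmeas : Measurable fun s => g (leftLim f s) := hgm.comp f.mono.leftLim.measurable
  rw [IntegrableOn, ← f.map_genInv hab, integrable_map_measure hmeas.aestronglyMeasurable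
    (f.monotone_genInv hab).measurable.aemeasurable]
  exact f.integrableOn_comp_leftLim_genInv hab hgm hgb

theorem hasSum_jumpCorrection (hab : a ≤ b) (hgm : Measurable g)
    (hgb : ∀ z ∈ Icc (f a) (f b), |g z| ≤ M) :
    HasSum ((upJumps f a b).indicator (jumpCorrection f g))
      ((∫ z in Ioc (f a) (f b), g z) - ∫ s in Ioc a b, g (leftLim f s) ∂f.measure) := by
  set Φ := fun z => g (leftLim f (f.genInv a b z))
  set gap : upJumps f a b → Set ℝ := fun s => Ioc (leftLim f s) (f s)
  have : Countable (upJumps f a b) :=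
    (f.countable_leftLim_ne.mono fun _ hs => hs.2.ne).to_subtype
  have hgapD : ⋃ s, gap s ⊆ Ioc (f a) (f b) := iUnion_subset fun s =>
    Ioc_subset_Ioc (f.mono.le_leftLim s.2.1.1) (f.mono s.2.1.2)
  have hdisj : Pairwise (Disjoint on gap) := fun s s' hne => by
    rcases lt_or_gt_of_ne (Subtype.coe_injective.ne hne) with h | h
    · exact Ioc_disjoint_Ioc_of_le (f.mono.le_leftLim h)
    · exact (Ioc_disjoint_Ioc_of_le (f.mono.le_leftLim h)).symm
  have hgap : ∀ s : upJumps f a b,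
      jumpCorrection f g s = ∫ z in Ioc (leftLim f s) (f s), (g z - Φ z) := fun s => by
    rw [jumpCorrection, intervalIntegral.integral_of_le s.2.2.le]
    refine setIntegral_congr_fun measurableSet_Ioc fun z hz => ?_
    simp only [Φ, f.genInv_eq_of_mem_gap hab s.2.1 hz]
  have hoff : ∀ z ∈ Ioc (f a) (f b) \ ⋃ s, gap s, g z - Φ z = 0 := fun z ⟨hz, hgaps⟩ => by
    have hle := f.leftLim_genInv_le hab hz
    obtain heq | hlt := hle.eq_or_lt
    · simp only [Φ, heq, sub_self]
    · have hz' := f.le_apply_genInv hab hz.2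
      exact (hgaps (mem_iUnion.2 ⟨⟨f.genInv a b z, mem_upJumps.2 ⟨⟨f.left_lt_genInv hab hz,
        f.genInv_le_right hab⟩, hlt.trans_le hz'⟩⟩, hlt, hz'⟩)).elim
  have hgi : IntegrableOn g (Ioc (f a) (f b)) :=
    integrableOn_Ioc_of_abs_le hgm fun z hz => hgb z (Ioc_subset_Icc_self hz)
  have hΦi := f.integrableOn_comp_leftLim_genInv hab hgm hgb
  have hsum := hasSum_integral_iUnion (f := fun z => g z - Φ z) (fun _ => measurableSet_Ioc)
    hdisj ((hgi.sub hΦi).mono_set hgapD)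
  rw [← setIntegral_eq_of_subset_of_forall_sdiff_eq_zero measurableSet_Ioc hgapD hoff,
    integral_sub hgi hΦi, ← f.setIntegral_comp_leftLim_eq hab hgm] at hsum
  rw [← hasSum_subtype_iff_indicator]
  simpa only [Function.comp_def, hgap] using hsum

end StieltjesFunction

theorem leftLim_eq_of_eqOn {y : ℝ → ℝ} {a b s : ℝ} (hy : Monotone y) (h : EqOn x y (Icc a b))
    (hs : s ∈ Ioc a b) : leftLim x s = leftLim y s := by
  refine leftLim_eq_of_tendsto ((hy.tendsto_leftLim s).congr' ?_)
  filter_upwards [Ioo_mem_nhdsLT hs.1] with u hu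
  exact (h ⟨hu.1.le, hu.2.le.trans hs.2⟩).symm

theorem AntitoneOn.le_leftLim {a b s : ℝ} (hx : AntitoneOn x (Icc a b)) (hs : s ∈ Ioc a b) :
    x s ≤ leftLim x s := by
  have hsub : Ioo a s ⊆ Icc a b := fun u hu => ⟨hu.1.le, hu.2.le.trans hs.2⟩
  have hbelow : ∀ u ∈ Ioo a s, x s ≤ x u := fun u hu =>
    hx (hsub hu) ⟨hs.1.le, hs.2⟩ hu.2.le
  rw [leftLim_eq_of_tendsto ((hx.mono hsub).tendsto_nhdsWithin_Ioo_left (nonempty_Ioo.2 hs.1)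
    ⟨x s, forall_mem_image.2 hbelow⟩)]
  exact le_csInf ((nonempty_Ioo.2 hs.1).image x) (forall_mem_image.2 hbelow)

section Piece

variable {a b M : ℝ} {g : ℝ → ℝ}

theorem StieltjesFunction.integrableOn_and_hasSum_jumpCorrection_of_sub_eq
    (F : StieltjesFunction ℝ) (hab : a ≤ b)
    (hF : ∀ u ∈ Icc a b, F u - F a = x u - x a) (hgm : Measurable g)
    (hgb : ∀ z ∈ Icc (x a) (x b), |g z| ≤ M) :
    IntegrableOn (fun s => g (leftLim x s)) (Ioc a b) F.measure ∧
      HasSum ((upJumps x a b).indicator (jumpCorrection x g))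
        ((∫ z in Ioc (x a) (x b), g z) - ∫ s in Ioc a b, g (leftLim x s) ∂F.measure) := by
  set f : StieltjesFunction ℝ := F + StieltjesFunction.const ℝ (x a - F a)
  have hfx : EqOn x f (Icc a b) := fun u hu => by
    simp only [f, StieltjesFunction.add_apply, StieltjesFunction.const_apply]
    linarith [hF u hu]
  have hμ : f.measure = F.measure := by
    rw [StieltjesFunction.measure_add, StieltjesFunction.measure_const, add_zero]
  have hlim : ∀ s ∈ Ioc a b, leftLim x s = leftLim f s := fun s hs =>
    leftLim_eq_of_eqOn f.mono hfx hs
  have hfa : x a = f a := hfx ⟨le_rfl, hab⟩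
  have hfb : x b = f b := hfx ⟨hab, le_rfl⟩
  rw [hfa, hfb] at hgb ⊢
  have hint : ∫ s in Ioc a b, g (leftLim x s) ∂F.measure =
      ∫ s in Ioc a b, g (leftLim f s) ∂f.measure := by
    rw [hμ]
    exact setIntegral_congr_fun measurableSet_Ioc fun s hs => by simp only [hlim s hs]
  have hjumps : (upJumps x a b).indicator (jumpCorrection x g) =
      (upJumps f a b).indicator (jumpCorrection f g) := by
    ext s
    by_cases hs : s ∈ Ioc a b
    · simp only [indicator, mem_upJumps, jumpCorrection, hlim s hs,
        hfx (Ioc_subset_Icc_self hs), hs, true_and]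
    · simp only [indicator, mem_upJumps, hs, false_and, if_false]
  refine ⟨?_, by rw [hint, hjumps]; exact f.hasSum_jumpCorrection hab hgm hgb⟩
  rw [← hμ]
  exact (f.integrableOn_comp_leftLim hab hgm hgb).congr_fun
    (fun s hs => by simp only [hlim s hs]) measurableSet_Ioc

theorem AntitoneOn.integrableOn_and_hasSum_jumpCorrection (hx : AntitoneOn x (Icc a b))
    {F : StieltjesFunction ℝ} (hab : a ≤ b) (hF : ∀ u ∈ Icc a b, F u = F a) :
    IntegrableOn (fun s => g (leftLim x s)) (Ioc a b) F.measure ∧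
      HasSum ((upJumps x a b).indicator (jumpCorrection x g))
        ((∫ z in Ioc (x a) (x b), g z) - ∫ s in Ioc a b, g (leftLim x s) ∂F.measure) := by
  have hμ : F.measure (Ioc a b) = 0 := by
    rw [StieltjesFunction.measure_Ioc, hF b ⟨hab, le_rfl⟩, sub_self, ENNReal.ofReal_zero]
  have hjumps : upJumps x a b = ∅ :=
    eq_empty_of_forall_notMem fun s hs => (hx.le_leftLim hs.1).not_gt hs.2
  have hrange : Ioc (x a) (x b) = ∅ := Ioc_eq_empty (hx ⟨le_rfl, hab⟩ ⟨hab, le_rfl⟩ hab).not_gt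
  refine ⟨by rw [IntegrableOn, Measure.restrict_eq_zero.2 hμ]; exact integrable_zero_measure, ?_⟩
  rw [hjumps, hrange, indicator_empty, setIntegral_measure_zero _ hμ, Measure.restrict_empty,
    integral_zero_measure, sub_zero]
  exact hasSum_zero

end Piece

theorem Monotone.biUnion_Ioc_eq {τ : ℕ → ℝ} (hτ : Monotone τ) (N : ℕ) :
    ⋃ i ∈ Finset.range N, Ioc (τ i) (τ (i + 1)) = Ioc (τ 0) (τ N) :=
  (iUnion₂_subset fun i hi => Ioc_subset_Ioc (hτ (Nat.zero_le i))
    (hτ (Finset.mem_range.1 hi : i + 1 ≤ N))).antisymm (Ioc_subset_biUnion_Ioc N τ)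

theorem IsMonotonicityPartition.integral_mul_levelUpcross_eq (hP : IsMonotonicityPartition x τ N)
    {g : ℝ → ℝ} {F : StieltjesFunction ℝ}
    (hF : ∀ j < N, ∀ u ∈ Icc (τ j) (τ (j + 1)), F u = F (τ j) + max (x u - x (τ j)) 0)
    (hgm : Measurable g) (hgb : ∀ p q, ∃ M, ∀ z ∈ Icc p q, |g z| ≤ M) :
    ∫ z, g z * (levelUpcross x z (τ 0) (τ N)).toReal =
      (∫ s in Ioc (τ 0) (τ N), g (leftLim x s) ∂F.measure) +
        ∑' s : upJumps x (τ 0) (τ N), jumpCorrection x g s := by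
  have hpiece : ∀ i ∈ Finset.range N,
      IntegrableOn (fun s => g (leftLim x s)) (Ioc (τ i) (τ (i + 1))) F.measure ∧
      HasSum ((upJumps x (τ i) (τ (i + 1))).indicator (jumpCorrection x g))
        ((∫ z in Ioc (x (τ i)) (x (τ (i + 1))), g z) -
          ∫ s in Ioc (τ i) (τ (i + 1)), g (leftLim x s) ∂F.measure) := fun i hi => by
    have hi := Finset.mem_range.1 hi
    have hab := hP.monotone i.le_succ
    have hleft : τ i ∈ Icc (τ i) (τ (i + 1)) := ⟨le_rfl, hab⟩
    obtain ⟨M, hM⟩ := hgb (x (τ i)) (x (τ (i + 1)))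
    rcases hP.piece i hi with hmono | hanti
    · refine F.integrableOn_and_hasSum_jumpCorrection_of_sub_eq hab (fun u hu => ?_) hgm hM
      rw [hF i hi u hu, max_eq_left (sub_nonneg.2 (hmono hleft hu hu.1))]
      ring
    · refine hanti.integrableOn_and_hasSum_jumpCorrection hab fun u hu => ?_
      rw [hF i hi u hu, max_eq_right (sub_nonpos.2 (hanti hleft hu hu.1)), add_zero]
  have hdisj : (Finset.range N : Set ℕ).PairwiseDisjoint fun i => Ioc (τ i) (τ (i + 1)) :=
    hP.monotone.pairwise_disjoint_on_Ioc_succ.set_pairwise _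
  have hjumps : upJumps x (τ 0) (τ N) = ⋃ i ∈ Finset.range N, upJumps x (τ i) (τ (i + 1)) := by
    ext s
    simp only [mem_upJumps, ← hP.monotone.biUnion_Ioc_eq N, mem_iUnion, exists_prop, ← and_assoc,
      exists_and_right]
  have hsum := hasSum_sum fun i hi => (hpiece i hi).2
  rw [← Finset.indicator_biUnion _ _ (hdisj.mono fun i s hs => hs.1), ← hjumps,
    ← hasSum_subtype_iff_indicator, Function.comp_def] at hsum
  have hg : ∀ i < N, IntegrableOn g (Ioc (x (τ i)) (x (τ (i + 1)))) := fun i _ => by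
    obtain ⟨M, hM⟩ := hgb (x (τ i)) (x (τ (i + 1)))
    exact integrableOn_Ioc_of_abs_le hgm fun z hz => hM z (Ioc_subset_Icc_self hz)
  rw [hP.integral_mul_levelUpcross_eq_sum hg, hsum.tsum_eq, ← hP.monotone.biUnion_Ioc_eq N,
    integral_biUnion_finset _ (fun _ _ => measurableSet_Ioc) hdisj fun i hi => (hpiece i hi).1,
    Finset.sum_sub_distrib, add_sub_cancel]

theorem PiecewiseMonotone.exists_isMonotonicityPartition (hpm : PiecewiseMonotone x) {t : ℝ}
    (ht : 0 < t) : ∃ (N : ℕ) (τ : ℕ → ℝ), IsMonotonicityPartition x τ N ∧ τ 0 = 0 ∧ τ N = t := by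
  obtain ⟨N, τ, hτ, h0, hN, hpiece⟩ := hpm t ht
  refine ⟨N, fun j => τ ⟨min j N, Nat.lt_succ_of_le (min_le_right j N)⟩,
    ⟨fun i j hij => hτ (Fin.mk_le_mk.2 (min_le_min_right N hij)), fun i hi => ?_⟩, ?_, ?_⟩
  · have h1 : (⟨min i N, Nat.lt_succ_of_le (min_le_right i N)⟩ : Fin (N + 1)) =
        (⟨i, hi⟩ : Fin N).castSucc := Fin.ext (min_eq_left hi.le)
    have h2 : (⟨min (i + 1) N, Nat.lt_succ_of_le (min_le_right (i + 1) N)⟩ : Fin (N + 1)) =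
        (⟨i, hi⟩ : Fin N).succ := Fin.ext (min_eq_left hi)
    simpa only [h1, h2] using hpiece ⟨i, hi⟩
  · simpa using h0
  · simpa [Fin.last] using hN

end

theorem integral_upcross_eq_general (x : ℝ → ℝ) (hpm : PiecewiseMonotone x)
    (t : ℝ) (ht : 0 < t) (g : ℝ → ℝ) (hgm : Measurable g)
    (hgb : ∀ r : ℝ, 0 < r → ∃ M : ℝ, ∀ z : ℝ, |z| ≤ r → |g z| ≤ M)
    (F : StieltjesFunction ℝ) (hF : ∀ u : ℝ, 0 ≤ u → F u = (upVar x 0 u).toReal) :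
    ∫ z : ℝ, g z * (levelUpcross x z 0 t).toReal =
      (∫ s in Set.Ioc (0 : ℝ) t, g (Function.leftLim x s) ∂F.measure) +
        ∑' s : {s : ℝ // s ∈ Set.Ioc (0 : ℝ) t ∧ Function.leftLim x s < x s},
          ∫ z in (Function.leftLim x s.1)..(x s.1), (g z - g (Function.leftLim x s.1)) := by
  obtain ⟨N, τ, hP, hτ0, rfl⟩ := hpm.exists_isMonotonicityPartition ht
  rw [← hτ0] at hF ⊢
  have hbdd : ∀ p q, ∃ M, ∀ z ∈ Icc p q, |g z| ≤ M := fun p q => by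
    obtain ⟨M, hM⟩ := hgb (|p| + |q| + 1) (by positivity)
    refine ⟨M, fun z hz => hM z ?_⟩
    linarith [abs_le_max_abs_abs hz.1 hz.2, max_le_add_of_nonneg (abs_nonneg p) (abs_nonneg q)]
  exact hP.integral_mul_levelUpcross_eq (fun j hj u hu => hP.eq_add_max_of_upVar hF hj hu) hgm hbdd

/-- Change-of-variable formula for level upcrossings of a piecewise monotone càdlàg
path: `∫_ℝ g(z)·u^z(x,[0,t]) dz = ∫_{(0,t]} g(x_{s−}) dUTV(x,·)
+ Σ_{0<s≤t, Δx_s>0} ∫_{x_{s−}}^{x_s} (g(z) − g(x_{s−})) dz`. -/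
theorem integral_upcross_eq (x : ℝ → ℝ) (hx : Cadlag x) (hpm : PiecewiseMonotone x)
    (t : ℝ) (ht : 0 < t) (g : ℝ → ℝ) (hgm : Measurable g)
    (hgb : ∀ r : ℝ, 0 < r → ∃ M : ℝ, ∀ z : ℝ, |z| ≤ r → |g z| ≤ M)
    (F : StieltjesFunction ℝ) (hF : ∀ u : ℝ, 0 ≤ u → F u = (upVar x 0 u).toReal) :
    ∫ z : ℝ, g z * (levelUpcross x z 0 t).toReal =
      (∫ s in Set.Ioc (0 : ℝ) t, g (Function.leftLim x s) ∂F.measure) +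
        ∑' s : {s : ℝ // s ∈ Set.Ioc (0 : ℝ) t ∧ Function.leftLim x s < x s},
          ∫ z in (Function.leftLim x s.1)..(x s.1), (g z - g (Function.leftLim x s.1)) :=
  integral_upcross_eq_general x hpm t ht g hgm hgb F hF
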